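/- In a finite perfect-information game satisfying the no-indifference condition, any two pure-strategy subgame-perfect equilibria yield the same payoff vector at the root. -/

import Mathlib

set_option linter.unusedVariables false

/-- A finite game tree with `n` players: each internal node is controlled by a
player in `Fin n` and has `k+1` children; leaves carry a payoff vector. -/
inductive GameTree (n : ℕ) : Type
  | leaf (u : Fin n → ℝ) : GameTree n
  | node (p : Fin n) (k : ℕ) (c : Fin (k + 1) → GameTree n) : GameTree n

/-- A pure strategy profile: a choice of child at every internal node. -/
inductive PureProfile {n : ℕ} : GameTree n → Type
  | leaf {u : Fin n → ℝ} : PureProfile (.leaf u)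
  | node {p : Fin n} {k : ℕ} {c : Fin (k + 1) → GameTree n}
      (ch : Fin (k + 1)) (sub : ∀ j, PureProfile (c j)) :
      PureProfile (.node p k c)

/-- The payoff vector induced by a pure strategy profile. -/
def payoff {n : ℕ} : {t : GameTree n} → PureProfile t → Fin n → ℝ
  | .leaf u, .leaf, i => u i
  | .node _ _ _, .node ch sub, i => payoff (sub ch) i

/-- `Dev i g g'` : `g'` is a unilateral deviation of `g` by player `i`
(they agree at every node not controlled by `i`). -/
def Dev {n : ℕ} (i : Fin n) : {t : GameTree n} → PureProfile t → PureProfile t → Prop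
  | .leaf _, _, _ => True
  | .node p _ _, .node ch sub, .node ch' sub' =>
      (p ≠ i → ch' = ch) ∧ ∀ j, Dev i (sub j) (sub' j)

/-- Subgame-perfect equilibrium for pure profiles: at every node, no player can
strictly improve her payoff in the subgame rooted there by a unilateral deviation. -/
def IsSPE {n : ℕ} : {t : GameTree n} → PureProfile t → Prop
  | .leaf _, _ => True
  | .node p k c, .node ch sub =>
      (∀ j, IsSPE (sub j)) ∧
      ∀ (i : Fin n) (g' : PureProfile (.node p k c)),
        Dev i (.node ch sub) g' →
        payoff g' i ≤ payoff (PureProfile.node (p := p) ch sub) i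

/-- The payoffs of leaves of the game tree. -/
def IsLeafPayoff {n : ℕ} : GameTree n → (Fin n → ℝ) → Prop
  | .leaf u, v => u = v
  | .node _ _ c, v => ∃ j, IsLeafPayoff (c j) v

/-- No-indifference condition: if two leaves give the same payoff to some
player, they give the same payoff to every player. -/
def NoIndifference {n : ℕ} (t : GameTree n) : Prop :=
  ∀ u v, IsLeafPayoff t u → IsLeafPayoff t v → (∃ i, u i = v i) → u = v


/-!
By induction on the tree. At a node of player `p`, the induction hypothesis says that all
equilibria of a subgame yield the same payoff vector, so both equilibria compare the children
by the same values. Each of them picks a child that is optimal for `p` among these, hence the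
two picked children give `p` the same payoff, and no-indifference upgrades this to equality of
the whole payoff vectors.
-/

theorem Dev.refl {n : ℕ} (i : Fin n) : ∀ {t : GameTree n} (g : PureProfile t), Dev i g g
  | .leaf _, _ => by simp only [Dev]
  | .node _ _ _, .node _ sub => ⟨fun _ => rfl, fun j => Dev.refl i (sub j)⟩

theorem isLeafPayoff_payoff {n : ℕ} : ∀ {t : GameTree n} (g : PureProfile t),
    IsLeafPayoff t (payoff g)
  | .leaf _, .leaf => rfl
  | .node _ _ _, .node ch sub => ⟨ch, isLeafPayoff_payoff (sub ch)⟩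

theorem NoIndifference.child {n : ℕ} {p : Fin n} {k : ℕ} {c : Fin (k + 1) → GameTree n}
    (h : NoIndifference (.node p k c)) (j : Fin (k + 1)) : NoIndifference (c j) :=
  fun u v hu hv huv => h u v ⟨j, hu⟩ ⟨j, hv⟩ huv

theorem IsSPE.payoff_child_le {n : ℕ} {p : Fin n} {k : ℕ} {c : Fin (k + 1) → GameTree n}
    {ch : Fin (k + 1)} {sub : ∀ j, PureProfile (c j)}
    (hg : IsSPE (PureProfile.node (p := p) ch sub)) (j : Fin (k + 1)) :
    payoff (sub j) p ≤ payoff (sub ch) p :=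
  hg.2 p (.node j sub) ⟨fun h => absurd rfl h, fun j => Dev.refl p (sub j)⟩

theorem IsSPE.payoff_eq {n : ℕ} : ∀ {t : GameTree n} {g g' : PureProfile t},
    NoIndifference t → IsSPE g → IsSPE g' → payoff g = payoff g'
  | .leaf _, .leaf, .leaf, _, _, _ => rfl
  | .node p _ _, .node ch sub, .node ch' sub', hni, hg, hg' => by
    have hsub : ∀ j, payoff (sub j) = payoff (sub' j) := fun j =>
      IsSPE.payoff_eq (hni.child j) (hg.1 j) (hg'.1 j)
    have hp : payoff (sub ch) p = payoff (sub' ch') p := le_antisymm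
      (by simpa only [hsub] using hg'.payoff_child_le ch)
      (by simpa only [hsub] using hg.payoff_child_le ch')
    exact hni _ _ ⟨ch, isLeafPayoff_payoff (sub ch)⟩ ⟨ch', isLeafPayoff_payoff (sub' ch')⟩ ⟨p, hp⟩

theorem stmt4 {n : ℕ} (t : GameTree n) (hni : NoIndifference t)
    (g g' : PureProfile t) (hg : IsSPE g) (hg' : IsSPE g') :
    ∀ i, payoff g i = payoff g' i :=
  congrFun (IsSPE.payoff_eq hni hg hg')
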